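/- arXiv:1504.01709 — 3 statements merged into one kernel-verified Lean document; each statement's English description precedes it below -/
import Mathlib

section
/- Let A be a copyless CRA in normal form with respect to a linear order ⪯ on its registers, and assume A is strongly connected (every state is reachable from every state). Then for all states q, q' of A there exist a word w^{q,q'} and a substitution σ^{q,q'} such that: (1) δ*(q, w^{q,q'}) = (q', σ^{q,q'}); (2) w^{q,q'} contains every letter of the alphabet Σ; and (3) σ^{q,q'} is a collapse substitution of A, i.e., Var(σ^{q,q'}(x)) = ∅ for every register x that is non-stable in A. -/
/-! ### Expressions over a semiring with variables -/

/-- Syntax trees of expressions over a semiring `S` with variables in `X`,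
built from constants, variables, and the two semiring operations. -/
inductive Expr (S X : Type) : Type where
  | const : S → Expr S X
  | var : X → Expr S X
  | add : Expr S X → Expr S X → Expr S X
  | mul : Expr S X → Expr S X → Expr S X

namespace Expr

variable {S X Y : Type}

/-- Evaluation of an expression under a valuation `ν : X → S`. -/
def eval [Add S] [Mul S] (ν : X → S) : Expr S X → S
  | const c => c
  | var x => ν x
  | add e₁ e₂ => e₁.eval ν + e₂.eval ν
  | mul e₁ e₂ => e₁.eval ν * e₂.eval ν

/-- Number of occurrences of the variable `x` in an expression. -/
def varCount [DecidableEq X] (x : X) : Expr S X → ℕ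
  | const _ => 0
  | var y => if y = x then 1 else 0
  | add e₁ e₂ => e₁.varCount x + e₂.varCount x
  | mul e₁ e₂ => e₁.varCount x + e₂.varCount x

/-- The set `Var(e)` of variables occurring in an expression. -/
def vars [DecidableEq X] : Expr S X → Finset X
  | const _ => ∅
  | var x => {x}
  | add e₁ e₂ => e₁.vars ∪ e₂.vars
  | mul e₁ e₂ => e₁.vars ∪ e₂.vars

/-- An expression is copyless if every variable occurs at most once in it. -/
def Copyless [DecidableEq X] (e : Expr S X) : Prop :=
  ∀ x : X, e.varCount x ≤ 1

/-- Substituting an expression `σ x` for each variable `x`. -/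
def subst (σ : X → Expr S Y) : Expr S X → Expr S Y
  | const c => const c
  | var x => σ x
  | add e₁ e₂ => add (e₁.subst σ) (e₂.subst σ)
  | mul e₁ e₂ => mul (e₁.subst σ) (e₂.subst σ)

/-- An expression never mentions the constant `0`. -/
def ZeroFree [Zero S] : Expr S X → Prop
  | const c => c ≠ (0 : S)
  | var _ => True
  | add e₁ e₂ => e₁.ZeroFree ∧ e₂.ZeroFree
  | mul e₁ e₂ => e₁.ZeroFree ∧ e₂.ZeroFree

/-- Number of constants mentioned in an expression. -/
def constCount : Expr S X → ℕ
  | const _ => 1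
  | var _ => 0
  | add e₁ e₂ => e₁.constCount + e₂.constCount
  | mul e₁ e₂ => e₁.constCount + e₂.constCount

/-- The top node of the expression is a `⊕`-node. -/
def isAddNode : Expr S X → Bool
  | add _ _ => true
  | _ => false

/-- The top node of the expression is a `⊙`-node. -/
def isMulNode : Expr S X → Bool
  | mul _ _ => true
  | _ => false

/-- The alternation `Alt(e)` of an expression: the maximal number of shifts
between `⊕` and `⊙` along branches of the parse tree. -/
def alt : Expr S X → ℕ
  | const _ => 0
  | var _ => 0
  | add e₁ e₂ =>
      max (e₁.alt + (if e₁.isMulNode then 1 else 0))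
          (e₂.alt + (if e₂.isMulNode then 1 else 0)) + 1
  | mul e₁ e₂ =>
      max (e₁.alt + (if e₁.isAddNode then 1 else 0))
          (e₂.alt + (if e₂.isAddNode then 1 else 0)) + 1

end Expr

/-! ### Substitutions -/

namespace Subs

variable {S X : Type}

/-- A substitution is copyless if each `σ x` is a copyless expression and
distinct registers use disjoint sets of variables. -/
def Copyless [DecidableEq X] (σ : X → Expr S X) : Prop :=
  (∀ x : X, (σ x).Copyless) ∧
    ∀ x y : X, x ≠ y → Disjoint ((σ x).vars) ((σ y).vars)

/-- Composition `σ ∘ τ` of substitutions: `(σ ∘ τ)(x) = σ̂(τ(x))`. -/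
def comp (σ τ : X → Expr S X) : X → Expr S X :=
  fun x => (τ x).subst σ

/-- The identity substitution. -/
def idS : X → Expr S X := fun x => Expr.var x

/-- `σ^n`, the `n`-fold composition of `σ` with itself. -/
def iterate (σ : X → Expr S X) : ℕ → (X → Expr S X)
  | 0 => idS
  | n + 1 => comp σ (iterate σ n)

/-- A substitution is in normal form w.r.t. the order on `X` if every variable
mentioned in `σ x` is at least `x`. -/
def NormalForm [DecidableEq X] [LE X] (σ : X → Expr S X) : Prop :=
  ∀ x y : X, y ∈ (σ x).vars → x ≤ y

/-- The register `x` is `σ`-stable, i.e. `x ∈ Var(σ x)`. -/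
def Stable [DecidableEq X] (σ : X → Expr S X) (x : X) : Prop :=
  x ∈ (σ x).vars

/-- A substitution is collapsing if every non-`σ`-stable register is mapped
to a variable-free (ground) expression. -/
def Collapsing [DecidableEq X] (σ : X → Expr S X) : Prop :=
  ∀ y : X, ¬ Stable σ y → (σ y).vars = ∅

end Subs

/-! ### Cost register automata -/

/-- A cost register automaton over semiring `S`, alphabet `A` and registers `X`. -/
structure CRA (S A X : Type) where
  Q : Type
  [finQ : Fintype Q]
  δ : Q → A → Q × (X → Expr S X)
  q0 : Q
  ν0 : X → S
  μ : Q → Expr S X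

attribute [instance] CRA.finQ

namespace CRA

variable {S A X : Type}

/-- One step of the run of a CRA on a letter. -/
def step [Add S] [Mul S] (M : CRA S A X) (c : M.Q × (X → S)) (a : A) : M.Q × (X → S) :=
  ((M.δ c.1 a).1, fun x => ((M.δ c.1 a).2 x).eval c.2)

/-- The configuration reached by the (unique) run of a CRA on a word. -/
def run [Add S] [Mul S] (M : CRA S A X) (w : List A) : M.Q × (X → S) :=
  w.foldl M.step (M.q0, M.ν0)

/-- The output `⟦M⟧(w)` of the CRA on the word `w`. -/
def output [Add S] [Mul S] (M : CRA S A X) (w : List A) : S :=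
  (M.μ (M.run w).1).eval (M.run w).2

/-- A CRA is copyless if all its transition substitutions and all its output
expressions are copyless. -/
def CopylessCRA [DecidableEq X] (M : CRA S A X) : Prop :=
  (∀ (q : M.Q) (a : A), Subs.Copyless (M.δ q a).2) ∧
    ∀ q : M.Q, (M.μ q).Copyless

/-- The transitive closure `δ*` of the transition function, composing the
substitutions along the word. -/
def deltaStar (M : CRA S A X) (q : M.Q) : List A → M.Q × (X → Expr S X)
  | [] => (q, Subs.idS)
  | a :: w =>
      ((M.deltaStar (M.δ q a).1 w).1,
        Subs.comp (M.δ q a).2 ((M.deltaStar (M.δ q a).1 w).2))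

/-- A CRA is in normal form if all its transition substitutions are. -/
def NormalFormCRA [DecidableEq X] [LE X] (M : CRA S A X) : Prop :=
  ∀ (q : M.Q) (a : A), Subs.NormalForm (M.δ q a).2

/-- A register is stable in `M` if it is stable on every substitution occurring
in `δ*`. -/
def StableIn [DecidableEq X] (M : CRA S A X) (x : X) : Prop :=
  ∀ (q : M.Q) (w : List A), Subs.Stable (M.deltaStar q w).2 x

/-- Every state of `M` is reachable from every state. -/
def StronglyConnected (M : CRA S A X) : Prop :=
  ∀ q q' : M.Q, ∃ w : List A, (M.deltaStar q w).1 = q'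

/-- The ground expression `ν0 ∘ σ1 ∘ … ∘ σn ∘ μ(qn)` arising from the run on `w`. -/
def groundExpr (M : CRA S A X) (w : List A) : Expr S X :=
  ((M.μ (M.deltaStar M.q0 w).1).subst ((M.deltaStar M.q0 w).2)).subst
    (fun x => Expr.const (M.ν0 x))

/-- The CRA has bounded alternation: the alternation of all ground output
expressions is uniformly bounded. -/
def BoundedAlt (M : CRA S A X) : Prop :=
  ∃ N : ℕ, ∀ w : List A, (M.groundExpr w).alt ≤ N

end CRA

/-! ### Auxiliary lemmas -/

namespace Expr

variable {S X : Type}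

theorem subst_id' : ∀ e : Expr S X, e.subst (fun x => Expr.var x) = e
  | const _ => rfl
  | var _ => rfl
  | add e₁ e₂ => by rw [subst, subst_id' e₁, subst_id' e₂]
  | mul e₁ e₂ => by rw [subst, subst_id' e₁, subst_id' e₂]

theorem subst_subst (σ ρ : X → Expr S X) :
    ∀ e : Expr S X, (e.subst ρ).subst σ = e.subst (fun y => (ρ y).subst σ)
  | const _ => rfl
  | var _ => rfl
  | add e₁ e₂ => by rw [subst, subst, subst, subst_subst σ ρ e₁, subst_subst σ ρ e₂]
  | mul e₁ e₂ => by rw [subst, subst, subst, subst_subst σ ρ e₁, subst_subst σ ρ e₂]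

theorem vars_subst [DecidableEq X] (σ : X → Expr S X) :
    ∀ e : Expr S X, (e.subst σ).vars = e.vars.biUnion (fun y => (σ y).vars)
  | const _ => by simp [subst, vars]
  | var x => by simp [subst, vars]
  | add e₁ e₂ => by
      simp only [subst, vars, vars_subst σ e₁, vars_subst σ e₂]
      ext t; simp only [Finset.mem_union, Finset.mem_biUnion]; aesop
  | mul e₁ e₂ => by
      simp only [subst, vars, vars_subst σ e₁, vars_subst σ e₂]
      ext t; simp only [Finset.mem_union, Finset.mem_biUnion]; aesop

end Expr

namespace Subs

variable {S X : Type}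

theorem comp_idS (τ : X → Expr S X) : Subs.comp (idS : X → Expr S X) τ = τ := by
  funext x
  exact Expr.subst_id' (τ x)

theorem comp_assoc (σ ρ τ : X → Expr S X) :
    Subs.comp σ (Subs.comp ρ τ) = Subs.comp (Subs.comp σ ρ) τ := by
  funext x
  simp only [Subs.comp]
  exact Expr.subst_subst σ ρ (τ x)

/-- Pairwise disjointness of variable sets. -/
def DisjVars [DecidableEq X] (σ : X → Expr S X) : Prop :=
  ∀ x y : X, x ≠ y → Disjoint ((σ x).vars) ((σ y).vars)

theorem disjVars_idS [DecidableEq X] : DisjVars (idS : X → Expr S X) := by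
  intro x y hxy
  simp only [idS, Expr.vars, Finset.disjoint_singleton]
  exact hxy

theorem disjVars_comp [DecidableEq X] {σ τ : X → Expr S X}
    (hσ : DisjVars σ) (hτ : DisjVars τ) : DisjVars (comp σ τ) := by
  intro x y hxy
  rw [comp, comp, Expr.vars_subst, Expr.vars_subst]
  rw [Finset.disjoint_biUnion_left]
  intro a ha
  rw [Finset.disjoint_biUnion_right]
  intro b hb
  refine hσ a b ?_
  rintro rfl
  exact (Finset.disjoint_left.mp (hτ x y hxy)) ha hb

theorem normalForm_idS [DecidableEq X] [Preorder X] :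
    NormalForm (idS : X → Expr S X) := by
  intro x y hy
  simp [idS, Expr.vars] at hy
  exact le_of_eq hy.symm

theorem normalForm_comp [DecidableEq X] [Preorder X] {σ τ : X → Expr S X}
    (hσ : NormalForm σ) (hτ : NormalForm τ) : NormalForm (comp σ τ) := by
  intro x y hy
  rw [comp, Expr.vars_subst, Finset.mem_biUnion] at hy
  obtain ⟨z, hz, hyz⟩ := hy
  exact le_trans (hτ x z hz) (hσ z y hyz)

end Subs

namespace CRA

variable {S A X : Type}

theorem deltaStar_append (M : CRA S A X) (q : M.Q) (v u : List A) :
    M.deltaStar q (v ++ u) =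
      ((M.deltaStar (M.deltaStar q v).1 u).1,
        Subs.comp (M.deltaStar q v).2 (M.deltaStar (M.deltaStar q v).1 u).2) := by
  induction v generalizing q with
  | nil =>
      simp only [List.nil_append, deltaStar, Subs.comp_idS]
  | cons a v ih =>
      simp only [List.cons_append, List.append_eq, deltaStar]
      rw [ih (M.δ q a).1, Subs.comp_assoc]

theorem deltaStar_disjVars [DecidableEq X] (M : CRA S A X) (hc : M.CopylessCRA) :
    ∀ (w : List A) (q : M.Q), Subs.DisjVars (M.deltaStar q w).2
  | [], _ => Subs.disjVars_idS
  | a :: w, q =>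
      Subs.disjVars_comp ((hc.1 q a).2) (deltaStar_disjVars M hc w (M.δ q a).1)

theorem deltaStar_nf [DecidableEq X] [Preorder X] (M : CRA S A X)
    (hnf : M.NormalFormCRA) :
    ∀ (w : List A) (q : M.Q), Subs.NormalForm (M.deltaStar q w).2
  | [], _ => Subs.normalForm_idS
  | a :: w, q =>
      Subs.normalForm_comp (hnf q a) (deltaStar_nf M hnf w (M.δ q a).1)

/-- Persistence: a substitution collapsing all non-stable registers stays
collapsing after composing with any `δ*`-substitution. -/
theorem persist [DecidableEq X] (M : CRA S A X) (hc : M.CopylessCRA)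
    {σ : X → Expr S X} (hσ : ∀ x : X, ¬ M.StableIn x → (σ x).vars = ∅)
    (p : M.Q) (v : List A) :
    ∀ x : X, ¬ M.StableIn x →
      ((Subs.comp σ (M.deltaStar p v).2) x).vars = ∅ := by
  intro y hy
  rw [Subs.comp, Expr.vars_subst]
  rw [Finset.eq_empty_iff_forall_notMem]
  intro t ht
  rw [Finset.mem_biUnion] at ht
  obtain ⟨z, hz, htz⟩ := ht
  by_cases hst : M.StableIn z
  · have hzz : z ∈ (((M.deltaStar p v).2) z).vars := hst p v
    rcases eq_or_ne z y with rfl | hne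
    · exact hy hst
    · exact (Finset.disjoint_left.mp
        (M.deltaStar_disjVars hc v p y z hne.symm)) hz hzz
  · rw [hσ z hst] at htz
    exact absurd htz (Finset.notMem_empty t)

end CRA

/-! ### STATEMENT 5
In a copyless, strongly connected CRA in normal form, for every pair of states
`q, q'` there is a word `w` containing every letter of the alphabet whose
`δ*`-substitution from `q` to `q'` is a collapse substitution of the automaton. -/
/-- Main induction: for every upward-closed set `s` of registers and every
state `q` there is a word whose `δ*`-substitution from `q` collapses every
non-stable register in `s`. -/
theorem collapse_aux {S A X : Type} [DecidableEq X]
    [Fintype X] [LinearOrder X]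
    (M : CRA S A X) (hc : M.CopylessCRA) (hnf : M.NormalFormCRA)
    (hsc : M.StronglyConnected) :
    ∀ (n : ℕ) (s : Finset X), s.card = n → (∀ x ∈ s, ∀ z : X, x ≤ z → z ∈ s) →
      ∀ q : M.Q, ∃ w : List A,
        ∀ x ∈ s, ¬ M.StableIn x → (((M.deltaStar q w).2) x).vars = ∅ := by
  intro n
  induction n with
  | zero =>
      intro s hs _ q
      refine ⟨[], ?_⟩
      intro x hx
      rw [Finset.card_eq_zero.mp hs] at hx
      exact absurd hx (Finset.notMem_empty x)
  | succ n ih =>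
      intro s hs hup q
      have hne : s.Nonempty := Finset.card_pos.mp (by omega)
      set x := s.min' hne with hxdef
      have hxs : x ∈ s := Finset.min'_mem s hne
      have hs' : (s.erase x).card = n := by
        rw [Finset.card_erase_of_mem hxs, hs]
        omega
      have hup' : ∀ y ∈ s.erase x, ∀ z : X, y ≤ z → z ∈ s.erase x := by
        intro y hy z hyz
        have hy' := Finset.mem_erase.mp hy
        refine Finset.mem_erase.mpr ⟨?_, hup y hy'.2 z hyz⟩
        rintro rfl
        exact hy'.1 (le_antisymm hyz (Finset.min'_le s y hy'.2))
      obtain ⟨w₁, hw₁⟩ := ih (s.erase x) hs' hup' q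
      by_cases hstx : M.StableIn x
      · refine ⟨w₁, ?_⟩
        intro y hy hns
        rcases eq_or_ne y x with rfl | hne'
        · exact absurd hstx hns
        · exact hw₁ y (Finset.mem_erase.mpr ⟨hne', hy⟩) hns
      · -- `x` is non-stable: append a word killing `x`
        rw [CRA.StableIn] at hstx
        push_neg at hstx
        obtain ⟨q₀, w₀, hw₀⟩ := hstx
        set p := (M.deltaStar q w₁).1 with hp
        obtain ⟨u, hu⟩ := hsc p q₀
        refine ⟨w₁ ++ (u ++ w₀), ?_⟩
        set σ := (M.deltaStar q w₁).2 with hσdef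
        set τ := (M.deltaStar p (u ++ w₀)).2 with hτdef
        have hτnf : Subs.NormalForm τ := M.deltaStar_nf hnf _ _
        have hτdisj : Subs.DisjVars τ := M.deltaStar_disjVars hc _ _
        -- `x` does not occur in `τ x`
        have hτx : x ∉ (τ x).vars := by
          intro hmem
          rw [hτdef, M.deltaStar_append, hu] at hmem
          simp only [Subs.comp, Expr.vars_subst, Finset.mem_biUnion] at hmem
          obtain ⟨z, hz, hxz⟩ := hmem
          have h1 : x ≤ z := M.deltaStar_nf hnf w₀ q₀ x z hz
          have h2 : z ≤ x := M.deltaStar_nf hnf u p z x hxz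
          have : z = x := le_antisymm h2 h1
          subst this
          exact hw₀ hz
        have hcomp : (M.deltaStar q (w₁ ++ (u ++ w₀))).2 = Subs.comp σ τ := by
          rw [M.deltaStar_append]
        intro y hy hns
        rw [hcomp, Subs.comp, Expr.vars_subst,
          Finset.eq_empty_iff_forall_notMem]
        intro t ht
        rw [Finset.mem_biUnion] at ht
        obtain ⟨z, hz, htz⟩ := ht
        have hxy : x ≤ y := Finset.min'_le s y hy
        have hyz : y ≤ z := hτnf y z hz
        -- z ≠ x
        have hzx : z ≠ x := by
          intro h
          rw [h] at hyz hz
          have hyx : y = x := le_antisymm hyz hxy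
          rw [hyx] at hz
          exact hτx hz
        -- z is non-stable
        have hzns : ¬ M.StableIn z := by
          intro hst
          have hzz : z ∈ (τ z).vars := hst p (u ++ w₀)
          rcases eq_or_ne z y with rfl | hne'
          · exact hns hst
          · exact (Finset.disjoint_left.mp (hτdisj y z hne'.symm)) hz hzz
        -- z ∈ s.erase x, so σ collapses z
        have hzmem : z ∈ s.erase x :=
          Finset.mem_erase.mpr ⟨hzx, hup x hxs z (le_trans hxy hyz)⟩
        rw [hw₁ z hzmem hzns] at htz
        exact absurd htz (Finset.notMem_empty t)

theorem exists_collapse_word {S A X : Type} [CommSemiring S] [DecidableEq X]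
    [Fintype X] [LinearOrder X] [Fintype A]
    (M : CRA S A X) (hc : M.CopylessCRA) (hnf : M.NormalFormCRA)
    (hsc : M.StronglyConnected) :
    ∀ q q' : M.Q, ∃ (w : List A) (σ : X → Expr S X),
      M.deltaStar q w = (q', σ) ∧
      (∀ a : A, a ∈ w) ∧
      (∀ x : X, ¬ M.StableIn x → (σ x).vars = ∅) := by
  intro q q'
  obtain ⟨w₁, hw₁⟩ := collapse_aux M hc hnf hsc (Finset.univ : Finset X).card
    Finset.univ rfl (fun x _ z _ => Finset.mem_univ z) q
  set p₁ := (M.deltaStar q w₁).1 with hp₁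
  set L := (Finset.univ : Finset A).toList with hL
  set p₂ := (M.deltaStar p₁ L).1 with hp₂
  obtain ⟨u, hu⟩ := hsc p₂ q'
  refine ⟨w₁ ++ (L ++ u), (M.deltaStar q (w₁ ++ (L ++ u))).2, ?_, ?_, ?_⟩
  · have hst : (M.deltaStar q (w₁ ++ (L ++ u))).1 = q' := by
      rw [M.deltaStar_append, M.deltaStar_append, ← hp₁, ← hp₂, hu]
    exact Prod.ext hst rfl
  · intro a
    have : a ∈ L := Finset.mem_toList.mpr (Finset.mem_univ a)
    simp [List.mem_append, this]
  · intro x hx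
    have hcol : ∀ y : X, ¬ M.StableIn y →
        (((M.deltaStar q w₁).2) y).vars = ∅ :=
      fun y hy => hw₁ y (Finset.mem_univ y) hy
    have := M.persist hc hcol p₁ (L ++ u) x hx
    rw [M.deltaStar_append]
    exact this
end

section
/- For every bounded alternation copyless CRA A with regular look-ahead over a commutative semiring there exists an unambiguous bounded alternation copyless CRA A' (a nondeterministic copyless CRA with bounded alternation having exactly one accepting run on every word) that computes the same function, i.e., ⟦A⟧(w) = ⟦A'⟧(w) for every word w ∈ Σ*. -/
/-! ### CRA with regular look-ahead -/

/-- A transition of a CRA with regular look-ahead: from state `src`, if the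
remaining input suffix belongs to the regular language `lang`, go to `tgt`
applying the substitution `sub`. -/
structure RLATrans (S A X Q : Type) where
  src : Q
  lang : Language A
  regular : ∃ (n : ℕ) (D : DFA A (Fin n)), lang = D.accepts
  tgt : Q
  sub : X → Expr S X

/-- A cost register automaton with regular look-ahead: finitely many
transitions, and the look-ahead languages of transitions leaving the same state
are pairwise disjoint. -/
structure CRARLA (S A X : Type) where
  Q : Type
  [finQ : Fintype Q]
  trans : List (RLATrans S A X Q)
  disj : ∀ t₁ ∈ trans, ∀ t₂ ∈ trans, t₁ ≠ t₂ → t₁.src = t₂.src →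
    Disjoint t₁.lang t₂.lang
  q0 : Q
  ν0 : X → S
  μ : Q → Expr S X

attribute [instance] CRARLA.finQ

namespace CRARLA

variable {S A X : Type}

open Classical in
/-- Run of the look-ahead CRA from a configuration: at each position, take the
(unique) transition from the current state whose look-ahead language contains
the remaining suffix; `none` if no transition applies. -/
noncomputable def outAux [Add S] [Mul S] (M : CRARLA S A X) :
    M.Q → (X → S) → List A → Option S
  | q, ν, [] => some ((M.μ q).eval ν)
  | q, ν, a :: w =>
      if h : ∃ t ∈ M.trans, t.src = q ∧ (a :: w) ∈ t.lang then
        M.outAux h.choose.tgt (fun x => (h.choose.sub x).eval ν) w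
      else none

/-- The output `⟦M⟧(w)` of the look-ahead CRA (defined when a run exists). -/
noncomputable def outputRLA [Add S] [Mul S] (M : CRARLA S A X) (w : List A) :
    Option S :=
  M.outAux M.q0 M.ν0 w

open Classical in
/-- The composed substitution along the run, turned into the ground expression
`ν0 ∘ σ1 ∘ … ∘ σn ∘ μ(qn)`. -/
noncomputable def groundAux (M : CRARLA S A X) :
    M.Q → (X → Expr S X) → List A → Option (Expr S X)
  | q, σ, [] => some (((M.μ q).subst σ).subst (fun x => Expr.const (M.ν0 x)))
  | q, σ, a :: w =>
      if h : ∃ t ∈ M.trans, t.src = q ∧ (a :: w) ∈ t.lang then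
        M.groundAux h.choose.tgt (fun x => (h.choose.sub x).subst σ) w
      else none

/-- The ground output expression of the run on `w` (when a run exists). -/
noncomputable def ground (M : CRARLA S A X) (w : List A) : Option (Expr S X) :=
  M.groundAux M.q0 (fun x => Expr.var x) w

/-- The look-ahead CRA is copyless. -/
def CopylessRLA [DecidableEq X] (M : CRARLA S A X) : Prop :=
  (∀ t ∈ M.trans, Subs.Copyless t.sub) ∧ ∀ q : M.Q, (M.μ q).Copyless

/-- The look-ahead CRA has bounded alternation: the alternation of every ground
output expression arising from a run is uniformly bounded. -/
def BoundedAltRLA (M : CRARLA S A X) : Prop :=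
  ∃ N : ℕ, ∀ (w : List A) (e : Expr S X), M.ground w = some e → e.alt ≤ N

end CRARLA
/-! ### Nondeterministic cost register automata -/

/-- A nondeterministic CRA: `Δ q a q'` is the (at most one) substitution
labelling the transition `(q, a, q')`, and `F` is the set of final states. -/
structure NCRA (S A X : Type) where
  Q : Type
  [finQ : Fintype Q]
  Δ : Q → A → Q → Option (X → Expr S X)
  q0 : Q
  ν0 : X → S
  F : Set Q
  μ : Q → Expr S X

attribute [instance] NCRA.finQ

namespace NCRA

variable {S A X : Type}

/-- `r` is a run of `M` on `w` (a sequence of states starting in `q0` following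
transitions of `Δ`). -/
def IsRun (M : NCRA S A X) (w : List A) (r : Fin (w.length + 1) → M.Q) : Prop :=
  r 0 = M.q0 ∧
    ∀ i : Fin w.length, (M.Δ (r i.castSucc) (w.get i) (r i.succ)).isSome

/-- `r` is an accepting run of `M` on `w`. -/
def IsAccRun (M : NCRA S A X) (w : List A) (r : Fin (w.length + 1) → M.Q) : Prop :=
  M.IsRun w r ∧ r (Fin.last w.length) ∈ M.F

/-- `M` is unambiguous: every word has exactly one accepting run. -/
def Unambiguous (M : NCRA S A X) : Prop :=
  ∀ w : List A, ∃! r : Fin (w.length + 1) → M.Q, M.IsAccRun w r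

/-- `M` is copyless. -/
def CopylessNCRA [DecidableEq X] (M : NCRA S A X) : Prop :=
  (∀ (q : M.Q) (a : A) (q' : M.Q) (σ : X → Expr S X),
      M.Δ q a q' = some σ → Subs.Copyless σ) ∧
    ∀ q : M.Q, (M.μ q).Copyless

/-- `M.ReachE w q σ`: some run of `M` on `w` ends in state `q` with composed
substitution `σ` (over the initial register contents). -/
inductive ReachE (M : NCRA S A X) : List A → M.Q → (X → Expr S X) → Prop where
  | nil : ReachE M [] M.q0 (fun x => Expr.var x)
  | snoc {w : List A} {q : M.Q} {σ : X → Expr S X} {a : A} {q' : M.Q}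
      {τ : X → Expr S X} :
      ReachE M w q σ → M.Δ q a q' = some τ →
      ReachE M (w ++ [a]) q' (fun x => (τ x).subst σ)

/-- The ground output expression at state `q` with composed substitution `σ`. -/
def groundOf (M : NCRA S A X) (q : M.Q) (σ : X → Expr S X) : Expr S X :=
  ((M.μ q).subst σ).subst (fun x => Expr.const (M.ν0 x))

/-- `M` has bounded alternation: the alternation of the ground output
expression of every accepting run is uniformly bounded. -/
def BoundedAltNCRA (M : NCRA S A X) : Prop :=
  ∃ N : ℕ, ∀ (w : List A) (q : M.Q) (σ : X → Expr S X),
    M.ReachE w q σ → q ∈ M.F → (M.groundOf q σ).alt ≤ N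

end NCRA

/-! The unambiguous automaton simulates `M` and guesses, at every position, the residuals
`L / v = {x | x ++ v ∈ L}` of all look-ahead languages `L` of `M` by the remaining input `v`.
Since these languages are regular there are finitely many residuals. The guess is checked
backwards through `L / (a :: v) = (L / v) / [a]` and, in accepting states, `L / [] = L`, so on
every word only the correct guess survives; and `a :: v ∈ L ↔ [a] ∈ L / v` lets the automaton
read off the unique look-ahead transition of `M` that applies. Hence the unique accepting run
copies the run of `M`, substitution by substitution: the outputs and the ground output
expressions coincide, and copylessness and bounded alternation carry over. -/

namespace Expr

variable {S X Y : Type} [Add S] [Mul S]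

theorem eval_subst (σ : X → Expr S Y) (ν : Y → S) (e : Expr S X) :
    (e.subst σ).eval ν = e.eval fun x => (σ x).eval ν := by
  induction e with
  | const c => rfl
  | var x => rfl
  | add e₁ e₂ ih₁ ih₂ => simp only [subst, eval, ih₁, ih₂]
  | mul e₁ e₂ ih₁ ih₂ => simp only [subst, eval, ih₁, ih₂]

end Expr

namespace Language

variable {α : Type*}

def rightQuotient (L : Language α) (y : List α) : Language α :=
  {x | x ++ y ∈ L}

theorem mem_rightQuotient {L : Language α} {x y : List α} :
    x ∈ L.rightQuotient y ↔ x ++ y ∈ L :=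
  Iff.rfl

theorem rightQuotient_rightQuotient (L : Language α) (x y : List α) :
    (L.rightQuotient y).rightQuotient x = L.rightQuotient (x ++ y) := by
  ext z
  simp only [mem_rightQuotient, List.append_assoc]

end Language

theorem DFA.finite_range_rightQuotient {α σ : Type*} [Finite σ] (D : DFA α σ) :
    (Set.range D.accepts.rightQuotient).Finite := by
  refine (Set.finite_range fun T : Set σ => {x | D.eval x ∈ T}).subset ?_
  rintro _ ⟨y, rfl⟩
  refine ⟨{s | D.evalFrom s y ∈ D.accept}, ?_⟩
  ext x
  change D.eval x ∈ {s | D.evalFrom s y ∈ D.accept} ↔ x ++ y ∈ D.accepts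
  rw [DFA.mem_accepts, DFA.eval, DFA.evalFrom_of_append]
  rfl

theorem RLATrans.finite_range_rightQuotient {S A X Q : Type} (t : RLATrans S A X Q) :
    (Set.range t.lang.rightQuotient).Finite := by
  obtain ⟨n, D, h⟩ := t.regular
  rw [h]
  exact D.finite_range_rightQuotient

namespace NCRA

variable {S A X : Type} {M : NCRA S A X}

theorem IsRun.exists_reachE {w : List A} {r : Fin (w.length + 1) → M.Q} (hr : M.IsRun w r)
    (j : Fin (w.length + 1)) : ∃ σ, M.ReachE (w.take j) (r j) σ := by
  induction j using Fin.induction with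
  | zero =>
    rw [Fin.val_zero, List.take_zero, hr.1]
    exact ⟨_, .nil⟩
  | succ i ih =>
    obtain ⟨σ, hσ⟩ := ih
    obtain ⟨τ, hτ⟩ := Option.isSome_iff_exists.mp (hr.2 i)
    rw [Fin.val_succ, ← List.take_concat_get' w i i.isLt]
    exact ⟨_, hσ.snoc hτ⟩

theorem IsAccRun.exists_reachE {w : List A} {r : Fin (w.length + 1) → M.Q}
    (hr : M.IsAccRun w r) : ∃ σ, M.ReachE w (r (Fin.last w.length)) σ := by
  simpa only [Fin.val_last, List.take_length] using hr.1.exists_reachE (Fin.last w.length)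

end NCRA

namespace CRARLA

variable {S A X : Type} (M : CRARLA S A X)

def residuals (v : List A) (t : {t // t ∈ M.trans}) : Language A :=
  t.1.lang.rightQuotient v

theorem finite_range_residuals : (Set.range M.residuals).Finite := by
  classical
  refine (Set.Finite.pi fun t : {t // t ∈ M.trans} => t.1.finite_range_rightQuotient).subset ?_
  rintro _ ⟨v, rfl⟩ t -
  exact ⟨v, rfl⟩

noncomputable instance : Fintype (Set.range M.residuals) :=
  M.finite_range_residuals.fintype

open Classical in
noncomputable def transAt (q : M.Q) (x : List A) : Option (RLATrans S A X M.Q) :=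
  if h : ∃ t ∈ M.trans, t.src = q ∧ x ∈ t.lang then some h.choose else none

variable {M}

theorem residuals_cons (a : A) (v : List A) :
    M.residuals (a :: v) = fun t => (M.residuals v t).rightQuotient [a] := by
  funext t
  exact (Language.rightQuotient_rightQuotient t.1.lang [a] v).symm

theorem residuals_cons_congr {v v' : List A} (h : M.residuals v = M.residuals v') (a : A) :
    M.residuals (a :: v) = M.residuals (a :: v') := by
  rw [residuals_cons, residuals_cons, h]

theorem eq_of_mem_lang {t₁ t₂ : RLATrans S A X M.Q} (h₁ : t₁ ∈ M.trans) (h₂ : t₂ ∈ M.trans)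
    (hsrc : t₁.src = t₂.src) {x : List A} (hx₁ : x ∈ t₁.lang) (hx₂ : x ∈ t₂.lang) : t₁ = t₂ :=
  by_contra fun hne => Set.disjoint_left.mp (M.disj t₁ h₁ t₂ h₂ hne hsrc) hx₁ hx₂

theorem transAt_eq_some_iff {q : M.Q} {x : List A} {t : RLATrans S A X M.Q} :
    M.transAt q x = some t ↔ t ∈ M.trans ∧ t.src = q ∧ x ∈ t.lang := by
  unfold transAt
  split_ifs with h
  · obtain ⟨h₁, h₂, h₃⟩ := h.choose_spec
    refine ⟨fun ht => Option.some_injective _ ht ▸ ⟨h₁, h₂, h₃⟩, fun ⟨ht, hs, hx⟩ => ?_⟩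
    rw [eq_of_mem_lang h₁ ht (h₂.trans hs.symm) h₃ hx]
  · exact ⟨nofun, fun ht => h ⟨t, ht⟩⟩

theorem transAt_cons_congr {v v' : List A} (h : M.residuals v = M.residuals v') (q : M.Q)
    (a : A) : M.transAt q (a :: v) = M.transAt q (a :: v') := by
  refine Option.ext fun t => ?_
  simp only [transAt_eq_some_iff]
  refine and_congr_right fun ht => and_congr_right fun _ => ?_
  exact iff_of_eq (congrArg (fun K => [a] ∈ K ⟨t, ht⟩) h)

theorem outAux_cons [Add S] [Mul S] (q : M.Q) (ν : X → S) (a : A) (w : List A) :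
    M.outAux q ν (a :: w) =
      (M.transAt q (a :: w)).bind fun t => M.outAux t.tgt (fun x => (t.sub x).eval ν) w := by
  rw [outAux, transAt]
  split <;> rfl

theorem groundAux_cons (q : M.Q) (σ : X → Expr S X) (a : A) (w : List A) :
    M.groundAux q σ (a :: w) =
      (M.transAt q (a :: w)).bind fun t => M.groundAux t.tgt (fun x => (t.sub x).subst σ) w := by
  rw [groundAux, transAt]
  split <;> rfl

theorem groundAux_drop {w : List A} {i : ℕ} (hi : i < w.length) (q : M.Q) (σ : X → Expr S X) :
    M.groundAux q σ (w.drop i) = (M.transAt q (w.drop i)).bind fun t =>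
      M.groundAux t.tgt (fun x => (t.sub x).subst σ) (w.drop (i + 1)) := by
  rw [List.drop_eq_getElem_cons hi, groundAux_cons]

theorem outAux_eq_map_groundAux [Add S] [Mul S] (q : M.Q) (σ : X → Expr S X) (w : List A) :
    M.outAux q (fun x => (σ x).eval M.ν0) w = (M.groundAux q σ w).map (Expr.eval M.ν0) := by
  induction w generalizing q σ with
  | nil => simp only [outAux, groundAux, Option.map_some, Expr.eval_subst, Expr.eval]
  | cons a w ih =>
    rw [outAux_cons, groundAux_cons]
    cases M.transAt q (a :: w) with
    | none => rfl
    | some t => simp only [Option.bind_some, ← ih, Expr.eval_subst]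

theorem outputRLA_eq_map_ground [Add S] [Mul S] (w : List A) :
    M.outputRLA w = (M.ground w).map (Expr.eval M.ν0) :=
  outAux_eq_map_groundAux M.q0 Expr.var w

variable (M) in
/-- The default value `getD` is never used when `M` has a run on `w`. -/
noncomputable def stateAt (w : List A) : ℕ → M.Q
  | 0 => M.q0
  | i + 1 => ((M.transAt (stateAt w i) (w.drop i)).map RLATrans.tgt).getD (stateAt w i)

theorem stateAt_succ {w : List A} {i : ℕ} {t : RLATrans S A X M.Q}
    (h : M.transAt (M.stateAt w i) (w.drop i) = some t) : M.stateAt w (i + 1) = t.tgt := by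
  rw [stateAt, h]
  rfl

theorem exists_transAt_of_groundAux_isSome {q : M.Q} {σ : X → Expr S X} {w : List A} {i : ℕ}
    (hi : i < w.length) (h : (M.groundAux q σ (w.drop i)).isSome) :
    ∃ t, M.transAt q (w.drop i) = some t := by
  rw [groundAux_drop hi] at h
  exact Option.isSome_iff_exists.mp (Option.isSome_of_isSome_bind h)

theorem exists_ground_eq_groundAux_stateAt {w : List A} (hw : (M.ground w).isSome) :
    ∀ i ≤ w.length, ∃ σ, M.ground w = M.groundAux (M.stateAt w i) σ (w.drop i)
  | 0, _ => ⟨_, rfl⟩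
  | i + 1, hi => by
    obtain ⟨σ, hσ⟩ := exists_ground_eq_groundAux_stateAt hw i (by omega)
    obtain ⟨t, ht⟩ := exists_transAt_of_groundAux_isSome hi (hσ ▸ hw)
    rw [groundAux_drop hi, ht, Option.bind_some] at hσ
    exact ⟨_, by rw [hσ, stateAt_succ ht]⟩

theorem exists_transAt_stateAt {w : List A} (hw : (M.ground w).isSome) {i : ℕ}
    (hi : i < w.length) : ∃ t, M.transAt (M.stateAt w i) (w.drop i) = some t :=
  let ⟨_, hσ⟩ := exists_ground_eq_groundAux_stateAt hw i hi.le
  exists_transAt_of_groundAux_isSome hi (hσ ▸ hw)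

variable (M) in
open Classical in
/-- A state `(q, some K)` guesses that the remaining input `v` has `M.residuals v = K`; `none`
occurs only in the initial state. The substitution is that of the transition of `M` applicable
to `a :: v` for any `v` with residuals `K'`, which by `transAt_cons_congr` does not depend on the
representative `K'.2.choose`. -/
noncomputable def toNCRA : NCRA S A X where
  Q := M.Q × Option (Set.range M.residuals)
  Δ s a s' := match s'.2 with
    | none => none
    | some K' =>
      if ∀ K ∈ s.2, K.1 = fun t => (K'.1 t).rightQuotient [a] then
        (M.transAt s.1 (a :: K'.2.choose)).bind fun t =>
          if t.tgt = s'.1 then some t.sub else none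
      else none
  q0 := (M.q0, none)
  ν0 := M.ν0
  F := {s | ∀ K ∈ s.2, K.1 = M.residuals []}
  μ s := M.μ s.1

theorem toNCRA_Δ_eq_some_iff {s : M.toNCRA.Q} {a : A} {q' : M.Q} {K' : Set.range M.residuals}
    {v : List A} (hK' : K'.1 = M.residuals v) {τ : X → Expr S X} :
    M.toNCRA.Δ s a (q', some K') = some τ ↔
      (∀ K ∈ s.2, K.1 = M.residuals (a :: v)) ∧
        ∃ t, M.transAt s.1 (a :: v) = some t ∧ t.tgt = q' ∧ t.sub = τ := by
  have hv : M.residuals K'.2.choose = M.residuals v := K'.2.choose_spec.trans hK'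
  have hcond : (∀ K ∈ s.2, K.1 = fun t => (K'.1 t).rightQuotient [a]) ↔
      ∀ K ∈ s.2, K.1 = M.residuals (a :: v) := by
    rw [hK', residuals_cons]
  dsimp only [toNCRA]
  split_ifs with h
  · rw [transAt_cons_congr hv, Option.bind_eq_some_iff, and_iff_right (hcond.mp h)]
    simp only [Option.ite_none_right_eq_some, Option.some_inj]
  · exact iff_of_false nofun fun h' => h (hcond.mpr h'.1)

theorem exists_of_toNCRA_Δ_eq_some {s s' : M.toNCRA.Q} {a : A} {τ : X → Expr S X}
    (h : M.toNCRA.Δ s a s' = some τ) :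
    ∃ v, s'.2 = some (Set.rangeFactorization M.residuals v) ∧
      (∀ K ∈ s.2, K.1 = M.residuals (a :: v)) ∧
        ∃ t, M.transAt s.1 (a :: v) = some t ∧ t.tgt = s'.1 ∧ t.sub = τ := by
  obtain ⟨q', _ | ⟨_, v, rfl⟩⟩ := s'
  · exact absurd h nofun
  · exact ⟨v, rfl, (toNCRA_Δ_eq_some_iff rfl).mp h⟩

theorem copylessNCRA_toNCRA [DecidableEq X] (hcopy : M.CopylessRLA) :
    M.toNCRA.CopylessNCRA := by
  refine ⟨fun s a s' τ h => ?_, fun s => hcopy.2 s.1⟩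
  obtain ⟨v, -, -, t, ht, -, rfl⟩ := exists_of_toNCRA_Δ_eq_some h
  exact hcopy.1 t (transAt_eq_some_iff.mp ht).1

theorem groundAux_of_toNCRA_reachE {u : List A} {s : M.toNCRA.Q} {σ : X → Expr S X}
    (h : M.toNCRA.ReachE u s σ) {v : List A} (hv : ∀ K ∈ s.2, K.1 = M.residuals v) :
    M.groundAux M.q0 Expr.var (u ++ v) = M.groundAux s.1 σ v := by
  induction h generalizing v with
  | nil => rfl
  | @snoc w s σ a s' τ _ hτ ih =>
    obtain ⟨v', hs', hcons, t, ht, htgt, rfl⟩ := exists_of_toNCRA_Δ_eq_some hτ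
    have hvv' : M.residuals v = M.residuals v' := (hv _ hs').symm
    rw [List.append_assoc, List.singleton_append, ih (residuals_cons_congr hvv' a ▸ hcons),
      groundAux_cons, transAt_cons_congr hvv', ht, Option.bind_some, htgt]

theorem ground_eq_of_toNCRA_reachE {w : List A} {s : M.toNCRA.Q} {σ : X → Expr S X}
    (h : M.toNCRA.ReachE w s σ) (hF : s ∈ M.toNCRA.F) :
    M.ground w = some (M.toNCRA.groundOf s σ) := by
  rw [ground, ← w.append_nil, groundAux_of_toNCRA_reachE h hF]
  rfl

theorem outputRLA_eq_of_toNCRA_reachE [Add S] [Mul S] {w : List A} {s : M.toNCRA.Q}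
    {σ : X → Expr S X} (h : M.toNCRA.ReachE w s σ) (hF : s ∈ M.toNCRA.F) :
    M.outputRLA w = some (((M.toNCRA.μ s).subst σ).eval M.toNCRA.ν0) := by
  rw [outputRLA_eq_map_ground, ground_eq_of_toNCRA_reachE h hF, Option.map_some,
    NCRA.groundOf, Expr.eval_subst]
  rfl

theorem boundedAltNCRA_toNCRA (halt : M.BoundedAltRLA) : M.toNCRA.BoundedAltNCRA :=
  let ⟨N, hN⟩ := halt
  ⟨N, fun w _ _ h hF => hN w _ (ground_eq_of_toNCRA_reachE h hF)⟩

theorem toNCRA_residuals_of_isAccRun {w : List A} {r : Fin (w.length + 1) → M.toNCRA.Q}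
    (hr : M.toNCRA.IsAccRun w r) (j : Fin (w.length + 1)) :
    ∀ K ∈ (r j).2, K.1 = M.residuals (w.drop j) := by
  induction j using Fin.reverseInduction with
  | last => exact fun K hK => by simpa only [Fin.val_last, List.drop_length] using hr.2 K hK
  | cast i ih =>
    obtain ⟨τ, hτ⟩ := Option.isSome_iff_exists.mp (hr.1.2 i)
    obtain ⟨v, hv, hcons, -⟩ := exists_of_toNCRA_Δ_eq_some hτ
    rw [Fin.val_succ] at ih
    rw [Fin.val_castSucc, List.drop_eq_getElem_cons i.isLt, ← residuals_cons_congr (ih _ hv)]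
    exact hcons

theorem toNCRA_isAccRun_succ {w : List A} {r : Fin (w.length + 1) → M.toNCRA.Q}
    (hr : M.toNCRA.IsAccRun w r) (i : Fin w.length) :
    ∃ t, M.transAt (r i.castSucc).1 (w.drop i) = some t ∧
      r i.succ = (t.tgt, some (Set.rangeFactorization M.residuals (w.drop (i + 1)))) := by
  obtain ⟨τ, hτ⟩ := Option.isSome_iff_exists.mp (hr.1.2 i)
  obtain ⟨v, hv, -, t, ht, htgt, -⟩ := exists_of_toNCRA_Δ_eq_some hτ
  have hvi : M.residuals v = M.residuals (w.drop (i + 1)) :=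
    toNCRA_residuals_of_isAccRun hr i.succ _ hv
  refine ⟨t, ?_, Prod.ext htgt.symm ?_⟩
  · rw [List.drop_eq_getElem_cons i.isLt, ← transAt_cons_congr hvi]
    exact ht
  · rw [hv]
    exact congrArg some (Subtype.ext hvi)

theorem toNCRA_isAccRun_unique {w : List A} {r r' : Fin (w.length + 1) → M.toNCRA.Q}
    (hr : M.toNCRA.IsAccRun w r) (hr' : M.toNCRA.IsAccRun w r') : r = r' := by
  funext j
  induction j using Fin.induction with
  | zero => rw [hr.1.1, hr'.1.1]
  | succ i ih =>
    obtain ⟨t, ht, hrt⟩ := toNCRA_isAccRun_succ hr i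
    obtain ⟨t', ht', hrt'⟩ := toNCRA_isAccRun_succ hr' i
    rw [ih, ht'] at ht
    rw [hrt, hrt', Option.some_injective _ ht]

variable (M) in
noncomputable def canonicalRun (w : List A) (j : Fin (w.length + 1)) : M.toNCRA.Q :=
  (M.stateAt w j,
    if (j : ℕ) = 0 then none else some (Set.rangeFactorization M.residuals (w.drop j)))

theorem residuals_canonicalRun {w : List A} {j : Fin (w.length + 1)}
    {K : Set.range M.residuals} (hK : K ∈ (M.canonicalRun w j).2) :
    K.1 = M.residuals (w.drop j) := by
  unfold canonicalRun at hK
  split_ifs at hK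
  · exact absurd hK nofun
  · rw [← Option.mem_some_iff.mp hK]
    rfl

theorem toNCRA_isAccRun_canonicalRun {w : List A} (hw : (M.ground w).isSome) :
    M.toNCRA.IsAccRun w (M.canonicalRun w) := by
  refine ⟨⟨rfl, fun i => ?_⟩, fun K hK => ?_⟩
  · obtain ⟨t, ht⟩ := exists_transAt_stateAt hw i.isLt
    have hsucc : M.canonicalRun w i.succ =
        (M.stateAt w (i + 1), some (Set.rangeFactorization M.residuals (w.drop (i + 1)))) := by
      simp only [canonicalRun, Fin.val_succ, Nat.add_one_ne_zero, if_false]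
      rfl
    rw [hsucc, Option.isSome_iff_exists]
    refine ⟨t.sub, (toNCRA_Δ_eq_some_iff rfl).mpr ⟨fun K hK => ?_, t, ?_, ?_, rfl⟩⟩
    · rw [residuals_canonicalRun hK, Fin.val_castSucc, List.drop_eq_getElem_cons i.isLt]
      rfl
    · rwa [List.drop_eq_getElem_cons i.isLt] at ht
    · exact (stateAt_succ ht).symm
  · simpa only [Fin.val_last, List.drop_length] using residuals_canonicalRun hK

theorem unambiguous_toNCRA (hground : ∀ w, (M.ground w).isSome) : M.toNCRA.Unambiguous :=
  fun w => ⟨_, toNCRA_isAccRun_canonicalRun (hground w),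
    fun _ hr => toNCRA_isAccRun_unique hr (toNCRA_isAccRun_canonicalRun (hground w))⟩

end CRARLA

theorem BAC_CRA_RLA_to_unambiguous {S A X : Type} [CommSemiring S]
    [DecidableEq X] [Fintype X]
    (M : CRARLA S A X) (hcopy : M.CopylessRLA) (halt : M.BoundedAltRLA)
    (htotal : ∀ w : List A, (M.outputRLA w).isSome) :
    ∃ (Y : Type) (dY : DecidableEq Y) (_ : Fintype Y) (M' : NCRA S A Y),
      M'.Unambiguous ∧ @NCRA.CopylessNCRA S A Y dY M' ∧ M'.BoundedAltNCRA ∧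
      ∀ w : List A, ∃ (q : M'.Q) (σ : Y → Expr S Y),
        M'.ReachE w q σ ∧ q ∈ M'.F ∧
        M.outputRLA w = some (((M'.μ q).subst σ).eval M'.ν0) := by
  have hground : ∀ w, (M.ground w).isSome := fun w => by
    simpa only [CRARLA.outputRLA_eq_map_ground, Option.isSome_map] using htotal w
  refine ⟨X, inferInstance, inferInstance, M.toNCRA, CRARLA.unambiguous_toNCRA hground,
    CRARLA.copylessNCRA_toNCRA hcopy, CRARLA.boundedAltNCRA_toNCRA halt, fun w => ?_⟩
  have hr := CRARLA.toNCRA_isAccRun_canonicalRun (hground w)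
  obtain ⟨σ, hσ⟩ := hr.exists_reachE
  exact ⟨_, σ, hσ, hr.2, CRARLA.outputRLA_eq_of_toNCRA_reachE hσ hr.2⟩
end

section
/- There exists a copyless CRA over the max-plus semiring (ℕ ∪ {−∞}, max, +, −∞, 0) and the alphabet Σ = {a, b, #}, with three registers, that computes the function f_2 defined as follows: for a word w ∈ Σ* written as w = w_0 # w_1 # … # w_k with each w_i ∈ {a,b}*, f_2(w) = Σ_{i=0}^{k} max( |w_i|_a , |w_i|_b ), where |w_i|_a and |w_i|_b denote the number of a's and b's in w_i respectively. -/
/-! ### The max-plus semiring `(ℕ ∪ {−∞}, max, +, −∞, 0)` -/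

/-- The carrier `ℕ ∪ {−∞}` of the max-plus semiring. -/
inductive MaxPlus : Type where
  | neginf : MaxPlus
  | nat : ℕ → MaxPlus
  deriving DecidableEq

namespace MaxPlus

/-- Semiring addition: `max`, with `−∞` neutral. -/
def addFn : MaxPlus → MaxPlus → MaxPlus
  | neginf, y => y
  | x, neginf => x
  | nat m, nat n => nat (max m n)

/-- Semiring multiplication: `+`, with `−∞` absorbing. -/
def mulFn : MaxPlus → MaxPlus → MaxPlus
  | neginf, _ => neginf
  | _, neginf => neginf
  | nat m, nat n => nat (m + n)

instance : Add MaxPlus := ⟨addFn⟩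
instance : Mul MaxPlus := ⟨mulFn⟩
instance : Zero MaxPlus := ⟨neginf⟩
instance : One MaxPlus := ⟨nat 0⟩

end MaxPlus

/-! ### The alphabet `Σ = {a, b, #}` -/

inductive ABH : Type where
  | a : ABH
  | b : ABH
  | hash : ABH
  deriving DecidableEq

instance : Fintype ABH := ⟨{ABH.a, ABH.b, ABH.hash}, fun x => by cases x <;> simp⟩

/-- The function `f_2`: for `w = w_0 # w_1 # … # w_k` with `w_i ∈ {a,b}*`,
`f_2(w) = Σ_{i=0}^{k} max(|w_i|_a, |w_i|_b)`. -/
def f2 (w : List ABH) : MaxPlus :=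
  MaxPlus.nat (((w.splitOn ABH.hash).map fun u => max (u.count ABH.a) (u.count ABH.b)).sum)

/-! Register `0` holds the value of the completed blocks, registers `1` and `2` count the `a`s and
`b`s of the current block. At `#` the automaton replaces register `0` by `x₀ ⊙ (x₁ ⊕ x₂)` and
resets the counters; its output is the same expression `x₀ ⊙ (x₁ ⊕ x₂)`. Correctness follows by
splitting the word at an arbitrary `#`: in max-plus notation `f2 (u ++ # :: v) = f2 u ⊙ f2 v`,
and after reading `u#` register `0` holds exactly what the automaton would have output on `u`. -/

namespace MaxPlus

theorem mul_assoc (x y z : MaxPlus) : x * y * z = x * (y * z) := by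
  cases x <;> cases y <;> cases z <;> first | rfl | exact congrArg nat (Nat.add_assoc ..)

theorem one_mul (x : MaxPlus) : 1 * x = x := by
  cases x
  · rfl
  · exact congrArg nat (Nat.zero_add _)

end MaxPlus

theorem f2_of_hash_notMem {w : List ABH} (hw : ABH.hash ∉ w) :
    f2 w = .nat (max (w.count .a) (w.count .b)) := by
  simp [f2, List.splitOn_eq_singleton hw]

theorem f2_append_hash_cons (u v : List ABH) : f2 (u ++ .hash :: v) = f2 u * f2 v := by
  simp only [f2, List.splitOn_append_cons_self, List.map_append, List.sum_append]
  rfl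

namespace BlockMaxCRA

open Expr

def regs (x : MaxPlus) (m n : ℕ) : Fin 3 → MaxPlus := ![x, .nat m, .nat n]

-- `MaxPlus.nat 0` is the multiplicative unit of the semiring; its zero is `MaxPlus.neginf`.
def subst : ABH → Fin 3 → Expr MaxPlus (Fin 3)
  | .a => ![var 0, mul (var 1) (const (.nat 1)), var 2]
  | .b => ![var 0, var 1, mul (var 2) (const (.nat 1))]
  | .hash => ![mul (var 0) (add (var 1) (var 2)), const (.nat 0), const (.nat 0)]

def outputExpr : Expr MaxPlus (Fin 3) := mul (var 0) (add (var 1) (var 2))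

def automaton : CRA MaxPlus ABH (Fin 3) where
  Q := Unit
  δ _ c := ((), subst c)
  q0 := ()
  ν0 := regs 1 0 0
  μ _ := outputExpr

def config (x : MaxPlus) (m n : ℕ) : automaton.Q × (Fin 3 → MaxPlus) := ((), regs x m n)

theorem copyless : automaton.CopylessCRA :=
  ⟨fun () c => by cases c <;> unfold Subs.Copyless Expr.Copyless <;> decide,
    fun () => by unfold Expr.Copyless; decide⟩

theorem outputExpr_eval_regs (x : MaxPlus) (m n : ℕ) :
    outputExpr.eval (regs x m n) = x * .nat (max m n) := rfl

theorem step_a (x : MaxPlus) (m n : ℕ) : automaton.step (config x m n) .a = config x (m + 1) n := by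
  refine Prod.ext rfl (funext fun i => ?_)
  fin_cases i <;> rfl

theorem step_b (x : MaxPlus) (m n : ℕ) : automaton.step (config x m n) .b = config x m (n + 1) := by
  refine Prod.ext rfl (funext fun i => ?_)
  fin_cases i <;> rfl

theorem step_hash (p : automaton.Q × (Fin 3 → MaxPlus)) :
    automaton.step p .hash = config (outputExpr.eval p.2) 0 0 := by
  refine Prod.ext rfl (funext fun i => ?_)
  fin_cases i <;> rfl

theorem foldl_step_of_hash_notMem {u : List ABH} (hu : ABH.hash ∉ u) (x : MaxPlus) (m n : ℕ) :
    u.foldl automaton.step (config x m n) = config x (m + u.count .a) (n + u.count .b) := by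
  induction u generalizing m n with
  | nil => rfl
  | cons c u ih =>
    rw [List.mem_cons, not_or] at hu
    obtain ⟨hc, hu⟩ := hu
    cases c
    · rw [List.foldl_cons, step_a, ih hu, List.count_cons_self, Nat.add_right_comm m]
      rfl
    · rw [List.foldl_cons, step_b, ih hu, List.count_cons_self, Nat.add_right_comm n]
      rfl
    · exact absurd rfl hc

theorem outputExpr_eval_foldl_step (x : MaxPlus) (w : List ABH) :
    outputExpr.eval (w.foldl automaton.step (config x 0 0)).2 = x * f2 w := by
  by_cases hw : ABH.hash ∈ w
  · obtain ⟨u, v, rfl⟩ := List.append_of_mem hw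
    rw [List.foldl_append, List.foldl_cons, step_hash, outputExpr_eval_foldl_step x u,
      outputExpr_eval_foldl_step, f2_append_hash_cons, MaxPlus.mul_assoc]
  · rw [foldl_step_of_hash_notMem hw, f2_of_hash_notMem hw, Nat.zero_add, Nat.zero_add]
    exact outputExpr_eval_regs x _ _
termination_by w.length
decreasing_by all_goals subst_vars; simp only [List.length_append, List.length_cons]; omega

end BlockMaxCRA

theorem exists_copyless_CRA_computing_f2 :
    ∃ M : CRA MaxPlus ABH (Fin 3),
      M.CopylessCRA ∧ ∀ w : List ABH, M.output w = f2 w :=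
  ⟨BlockMaxCRA.automaton, BlockMaxCRA.copyless,
    fun w => (BlockMaxCRA.outputExpr_eval_foldl_step 1 w).trans (MaxPlus.one_mul _)⟩
end
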